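/- Let γ > 0, λ ≤ 0, g ∈ ℝ^d, ω_k ∈ ℝ^d with ‖g‖² − 2γλ > 0, let c ∈ ℝ^d with c ≠ 0, and define q(ω) = λ + ⟨g, ω − ω_k⟩ + (γ/2)‖ω − ω_k‖². Set μ₊ = ‖c‖ / √(‖g‖² − 2γλ) and ω₊ = ω_k + (1/γ)((1/μ₊)·c − g). Then: (a) q(ω₊) = 0; (b) c = μ₊·(g + γ(ω₊ − ω_k)) with μ₊ > 0 (the Karush–Kuhn–Tucker conditions hold at ω₊ with multiplier μ₊); and (c) ω₊ is the unique global maximizer of ⟨c,·⟩ over {ω : q(ω) ≤ 0}, i.e., ⟨c,ω⟩ < ⟨c,ω₊⟩ for every ω ≠ ω₊ with q(ω) ≤ 0. -/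

import Mathlib

open scoped RealInnerProductSpace

/-!
Completing the square, `2γ q(ω) = ‖g + γ(ω - ω_k)‖² - (‖g‖² - 2γλ)`, and the choice of `ω₊`
makes the gradient `g + γ(ω₊ - ω_k)` equal to `c / μ₊`, whose squared norm is exactly
`‖g‖² - 2γλ`; this gives `q(ω₊) = 0` and the KKT identity. Since `q` is a quadratic with
Hessian `γ I`, its expansion at `ω₊` shows that any `ω ≠ ω₊` with `q(ω) ≤ q(ω₊)` lies strictly
on the descent side of the gradient, so `⟨c, ω - ω₊⟩ = μ₊ ⟨∇q(ω₊), ω - ω₊⟩ < 0`.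
-/

section QuadModel

variable {E : Type*} [NormedAddCommGroup E] [InnerProductSpace ℝ E]

noncomputable def quadModel (lam γ : ℝ) (g ωk ω : E) : ℝ :=
  lam + ⟪g, ω - ωk⟫ + γ / 2 * ‖ω - ωk‖ ^ 2

variable (lam γ : ℝ) (g ωk : E)

theorem two_mul_mul_quadModel (ω : E) :
    2 * γ * quadModel lam γ g ωk ω = ‖g + γ • (ω - ωk)‖ ^ 2 - (‖g‖ ^ 2 - 2 * γ * lam) := by
  rw [quadModel, norm_add_sq_real, inner_smul_right, norm_smul, Real.norm_eq_abs, mul_pow,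
    sq_abs]
  ring

theorem quadModel_eq_add_inner_gradient (ω ω' : E) :
    quadModel lam γ g ωk ω = quadModel lam γ g ωk ω' + ⟪g + γ • (ω' - ωk), ω - ω'⟫
      + γ / 2 * ‖ω - ω'‖ ^ 2 := by
  have hω : ω - ωk = (ω' - ωk) + (ω - ω') := by abel
  rw [quadModel, quadModel, hω, norm_add_sq_real, inner_add_right, inner_add_left,
    inner_smul_left, RCLike.conj_to_real]
  ring

variable {lam γ g ωk}

theorem inner_gradient_neg_of_quadModel_le (hγ : 0 < γ) {ω ω' : E}
    (hle : quadModel lam γ g ωk ω ≤ quadModel lam γ g ωk ω') (hne : ω ≠ ω') :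
    ⟪g + γ • (ω' - ωk), ω - ω'⟫ < 0 := by
  have hsep : 0 < γ / 2 * ‖ω - ω'‖ ^ 2 := by
    have := norm_pos_iff.mpr (sub_ne_zero.mpr hne)
    positivity
  linarith [quadModel_eq_add_inner_gradient lam γ g ωk ω ω']

end QuadModel

theorem stmt_3 {d : ℕ} (γ lam : ℝ) (hγ : 0 < γ)
    (g ωk c : EuclideanSpace ℝ (Fin d)) (hc : c ≠ 0)
    (hpos : 0 < ‖g‖ ^ 2 - 2 * γ * lam)
    (q : EuclideanSpace ℝ (Fin d) → ℝ)
    (hq : ∀ ω, q ω = lam + ⟪g, ω - ωk⟫ + γ / 2 * ‖ω - ωk‖ ^ 2)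
    (μ : ℝ) (hμ : μ = ‖c‖ / Real.sqrt (‖g‖ ^ 2 - 2 * γ * lam))
    (ωp : EuclideanSpace ℝ (Fin d))
    (hωp : ωp = ωk + (1 / γ) • ((1 / μ) • c - g)) :
    q ωp = 0 ∧
    (0 < μ ∧ c = μ • (g + γ • (ωp - ωk))) ∧
    ∀ ω, q ω ≤ 0 → ω ≠ ωp → ⟪c, ω⟫ < ⟪c, ωp⟫ := by
  obtain rfl : q = quadModel lam γ g ωk := funext hq
  have hc₀ : 0 < ‖c‖ := norm_pos_iff.mpr hc
  have hμ₀ : 0 < μ := hμ ▸ div_pos hc₀ (Real.sqrt_pos.mpr hpos)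
  have hgrad : g + γ • (ωp - ωk) = μ⁻¹ • c := by
    rw [hωp, add_sub_cancel_left, smul_smul, mul_one_div_cancel hγ.ne', one_smul, one_div,
      add_sub_cancel]
  have hkkt : c = μ • (g + γ • (ωp - ωk)) := by
    rw [hgrad, smul_inv_smul₀ hμ₀.ne']
  have hboundary : quadModel lam γ g ωk ωp = 0 := by
    have hnorm : ‖μ⁻¹ • c‖ = Real.sqrt (‖g‖ ^ 2 - 2 * γ * lam) := by
      rw [norm_smul, norm_inv, Real.norm_of_nonneg hμ₀.le, hμ, inv_div,
        div_mul_cancel₀ _ hc₀.ne']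
    have h := two_mul_mul_quadModel lam γ g ωk ωp
    rw [hgrad, hnorm, Real.sq_sqrt hpos.le, sub_self] at h
    exact (mul_eq_zero.mp h).resolve_left (by positivity)
  refine ⟨hboundary, ⟨hμ₀, hkkt⟩, fun ω hω hne => ?_⟩
  have hdescent := inner_gradient_neg_of_quadModel_le hγ (hω.trans hboundary.ge) hne
  have : ⟪c, ω - ωp⟫ < 0 := by
    rw [hkkt, inner_smul_left, RCLike.conj_to_real]
    exact mul_neg_of_pos_of_neg hμ₀ hdescent
  rw [inner_sub_right] at this
  linarith
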